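/- arXiv:2407.18533 — 7 statements merged into one kernel-verified Lean document; each statement's English description precedes it below -/
import Mathlib

section
/- Let ρ : [0,∞) → ℝ be convex, let ℧ : [0,∞) → [0,∞) be nondecreasing, and let 0 ≤ a ≤ b ≤ c be real numbers. Then ℧(c+a−b)·(ρ(b) + ρ(c+a−b) − ρ(a) − ρ(c)) + ℧(c+b−a)·(ρ(a) + ρ(c+b−a) − ρ(b) − ρ(c)) ≥ 0. -/
/-- Convexity rearrangement: for `ρ` convex on `[0,∞)`, `0 ≤ x ≤ y`, `0 ≤ z`,
`ρ(x+z) + ρ(y) ≤ ρ(x) + ρ(y+z)`. -/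
lemma convex_shift_ineq (ρ : ℝ → ℝ) (hρ : ConvexOn ℝ (Set.Ici (0 : ℝ)) ρ)
    {x y z : ℝ} (hx : 0 ≤ x) (hxy : x ≤ y) (hz : 0 ≤ z) :
    ρ (x + z) + ρ y ≤ ρ x + ρ (y + z) := by
  rcases eq_or_lt_of_le (by linarith : (0:ℝ) ≤ y - x + z) with h | h
  · have hyx : y = x := by linarith
    have hz0 : z = 0 := by linarith
    simp [hyx, hz0]
  · set d : ℝ := y - x + z with hd
    set t : ℝ := (y - x) / d with htdef
    have hd0 : 0 < d := h
    have ht0 : 0 ≤ t := div_nonneg (by linarith) hd0.le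
    have ht1 : t ≤ 1 := by
      rw [div_le_one hd0]; linarith
    have hmx : x ∈ Set.Ici (0:ℝ) := hx
    have hmyz : y + z ∈ Set.Ici (0:ℝ) := by simp; linarith
    have h1 := hρ.2 hmx hmyz ht0 (by linarith : 0 ≤ 1 - t) (by ring)
    have h2 := hρ.2 hmx hmyz (by linarith : 0 ≤ 1 - t) ht0 (by ring)
    have e1 : t • x + (1 - t) • (y + z) = x + z := by
      simp only [smul_eq_mul, htdef]
      field_simp
      ring
    have e2 : (1 - t) • x + t • (y + z) = y := by
      simp only [smul_eq_mul, htdef]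
      field_simp
      ring
    rw [e1] at h1
    rw [e2] at h2
    simp only [smul_eq_mul] at h1 h2
    linarith

/-- Key sign property in the growth lemma: for `ρ` convex on `[0,∞)`,
`℧ : [0,∞) → [0,∞)` nondecreasing, and `0 ≤ a ≤ b ≤ c`,
`℧(c+a−b)·(ρ(b)+ρ(c+a−b)−ρ(a)−ρ(c)) + ℧(c+b−a)·(ρ(a)+ρ(c+b−a)−ρ(b)−ρ(c)) ≥ 0`. -/
theorem weighted_convex_sign_property (ρ U : ℝ → ℝ)
    (hρ : ConvexOn ℝ (Set.Ici (0 : ℝ)) ρ)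
    (hU0 : ∀ x, 0 ≤ x → 0 ≤ U x) (hUmono : MonotoneOn U (Set.Ici (0 : ℝ)))
    (a b c : ℝ) (ha : 0 ≤ a) (hab : a ≤ b) (hbc : b ≤ c) :
    0 ≤ U (c + a - b) * (ρ b + ρ (c + a - b) - ρ a - ρ c)
        + U (c + b - a) * (ρ a + ρ (c + b - a) - ρ b - ρ c) := by
  -- T1 ≤ 0 : take x = a, y = b, z = c - b
  have hT1 : ρ (c + a - b) + ρ b ≤ ρ a + ρ c := by
    have := convex_shift_ineq ρ hρ ha hab (by linarith : (0:ℝ) ≤ c - b)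
    have e : a + (c - b) = c + a - b := by ring
    have e' : b + (c - b) = c := by ring
    rwa [e, e'] at this
  -- T1 + T2 ≥ 0 : take x = c + a - b, y = c, z = b - a
  have hsum : 2 * ρ c ≤ ρ (c + a - b) + ρ (c + b - a) := by
    have := convex_shift_ineq ρ hρ (by linarith : (0:ℝ) ≤ c + a - b)
      (by linarith : c + a - b ≤ c) (by linarith : (0:ℝ) ≤ b - a)
    have e : c + a - b + (b - a) = c := by ring
    have e' : c + (b - a) = c + b - a := by ring
    rw [e, e'] at this
    linarith
  -- U monotone: U (c+a-b) ≤ U (c+b-a)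
  have hU1 : 0 ≤ U (c + a - b) := hU0 _ (by linarith)
  have hUle : U (c + a - b) ≤ U (c + b - a) :=
    hUmono (by simp; linarith) (by simp; linarith) (by linarith)
  nlinarith [mul_le_mul_of_nonneg_left (show ρ b + ρ (c + a - b) - ρ a - ρ c ≤ 0 by linarith)
      (sub_nonneg.2 hUle)]
end

section
/- Let ℧ : [0,∞) → [0,∞) be nondecreasing, let 0 ≤ a ≤ b ≤ c be real numbers, and set ρ(x) = log(1+x). Then ℧(c+a−b)·(ρ(b) + ρ(c+a−b) − ρ(a) − ρ(c)) + ℧(c+b−a)·(ρ(a) + ρ(c+b−a) − ρ(b) − ρ(c)) ≤ −℧(c+b−a)·(b−a)²/(1 + b + c − a)². -/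
/-- Quantitative negativity of the symmetrized second difference of the test
function `ρ(x) = log(1+x)` weighted by a nondecreasing `℧ : [0,∞) → [0,∞)`:
for `0 ≤ a ≤ b ≤ c`,
`℧(c+a−b)·(ρ(b)+ρ(c+a−b)−ρ(a)−ρ(c)) + ℧(c+b−a)·(ρ(a)+ρ(c+b−a)−ρ(b)−ρ(c))
  ≤ −℧(c+b−a)·(b−a)²/(1+b+c−a)²`. -/
theorem log_test_function_negativity (U : ℝ → ℝ)
    (hU0 : ∀ x, 0 ≤ x → 0 ≤ U x) (hUmono : MonotoneOn U (Set.Ici (0 : ℝ)))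
    (a b c : ℝ) (ha : 0 ≤ a) (hab : a ≤ b) (hbc : b ≤ c) :
    letI ρ : ℝ → ℝ := fun x => Real.log (1 + x)
    U (c + a - b) * (ρ b + ρ (c + a - b) - ρ a - ρ c)
        + U (c + b - a) * (ρ a + ρ (c + b - a) - ρ b - ρ c)
      ≤ -(U (c + b - a) * (b - a) ^ 2 / (1 + b + c - a) ^ 2) := by
  dsimp only
  have pa : (0:ℝ) < 1 + a := by linarith
  have pb : (0:ℝ) < 1 + b := by linarith
  have pc : (0:ℝ) < 1 + c := by linarith
  have p1 : (0:ℝ) < 1 + (c + a - b) := by linarith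
  have p2 : (0:ℝ) < 1 + (c + b - a) := by linarith
  have harg1 : (0:ℝ) ≤ c + a - b := by linarith
  have harg2 : (0:ℝ) ≤ c + b - a := by linarith
  have hUle : U (c + a - b) ≤ U (c + b - a) :=
    hUmono harg1 harg2 (by linarith)
  have hU2 : 0 ≤ U (c + b - a) := hU0 _ harg2
  set D1 : ℝ := Real.log (1 + b) + Real.log (1 + (c + a - b)) - Real.log (1 + a) - Real.log (1 + c) with hD1def
  set D2 : ℝ := Real.log (1 + a) + Real.log (1 + (c + b - a)) - Real.log (1 + b) - Real.log (1 + c) with hD2def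
  have hD1 : 0 ≤ D1 := by
    have h : Real.log ((1 + a) * (1 + c)) ≤ Real.log ((1 + b) * (1 + (c + a - b))) := by
      apply Real.log_le_log (by positivity)
      nlinarith
    rw [Real.log_mul pa.ne' pc.ne', Real.log_mul pb.ne' p1.ne'] at h
    simp only [hD1def]
    linarith
  have hsum : D1 + D2 ≤ -((b - a) ^ 2 / (1 + c) ^ 2) := by
    have hx : (0:ℝ) < (1 + (c + a - b)) * (1 + (c + b - a)) := by positivity
    have hy : (0:ℝ) < (1 + c) * (1 + c) := by positivity
    have h := Real.log_le_sub_one_of_pos (show (0:ℝ) < (1 + (c + a - b)) * (1 + (c + b - a)) / ((1 + c) * (1 + c)) by positivity)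
    rw [Real.log_div hx.ne' hy.ne', Real.log_mul p1.ne' p2.ne',
      Real.log_mul pc.ne' pc.ne'] at h
    have hfrac : (1 + (c + a - b)) * (1 + (c + b - a)) / ((1 + c) * (1 + c)) - 1
        = -((b - a) ^ 2 / (1 + c) ^ 2) := by
      field_simp
      ring
    rw [hfrac] at h
    simp only [hD1def, hD2def]
    linarith
  have step1 : U (c + a - b) * D1 + U (c + b - a) * D2
      ≤ U (c + b - a) * (D1 + D2) := by
    nlinarith [mul_le_mul_of_nonneg_right hUle hD1]
  have step2 : U (c + b - a) * (D1 + D2)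
      ≤ U (c + b - a) * (-((b - a) ^ 2 / (1 + c) ^ 2)) :=
    mul_le_mul_of_nonneg_left hsum hU2
  have hden : (b - a) ^ 2 / (1 + b + c - a) ^ 2 ≤ (b - a) ^ 2 / (1 + c) ^ 2 :=
    div_le_div_of_nonneg_left (sq_nonneg _) (by positivity) (by nlinarith)
  calc U (c + a - b) * D1 + U (c + b - a) * D2
      ≤ U (c + b - a) * (-((b - a) ^ 2 / (1 + c) ^ 2)) := step1.trans step2
    _ ≤ -(U (c + b - a) * (b - a) ^ 2 / (1 + b + c - a) ^ 2) := by
        have := mul_le_mul_of_nonneg_left hden hU2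
        rw [mul_neg]
        rw [neg_le_neg_iff]
        calc U (c + b - a) * (b - a) ^ 2 / (1 + b + c - a) ^ 2
            = U (c + b - a) * ((b - a) ^ 2 / (1 + b + c - a) ^ 2) := by ring
          _ ≤ U (c + b - a) * ((b - a) ^ 2 / (1 + c) ^ 2) := this
end

section
/- Let 0 < ν < 1/10, h > 0, R > 0 and N = ⌊R/h⌋ with N ≥ 1000. Let μ be a finite Borel measure on [0,R) such that μ(Ξ_i) < (1−ν)·μ([0,R)) for every i ∈ {0, …, N−1}. Then there exists a nonempty set Z ⊆ {0, …, N−1} such that: (i) Δ_i ∩ Ξ_j = ∅ for all distinct i, j ∈ Z; (ii) μ(⋃_{i∈Z} Δ_i) ≥ (ν/20)·μ([0,R)); and (iii) μ([0,R) ∖ ⋃_{i∈Z} Ξ_i) ≥ (ν/20)·μ([0,R)). -/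
open MeasureTheory

/-- Mass-splitting lemma (Step 2 of Proposition 3.2): with nonoverlapping cells
`Δ_i` and overlapping cells `Ξ_i` on `[0,R)`, `N = ⌊R/h⌋ ≥ 1000`, if no
overlapping cell carries mass at least `(1-ν)` of the total for a finite Borel
measure `μ` on `[0,R)`, then there is a nonempty index set `Z` of well-separated
cells such that both `⋃_{i∈Z} Δ_i` and the complement of `⋃_{i∈Z} Ξ_i` carry at
least a fraction `ν/20` of the total mass. -/
theorem mass_splitting (ν h R : ℝ) (hν : 0 < ν) (hν' : ν < 1 / 10)
    (hh : 0 < h) (hR : 0 < R)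
    (μ : Measure ℝ) [IsFiniteMeasure μ] :
    let N : ℕ := (⌊R / h⌋).toNat
    let Δ : ℕ → Set ℝ := fun i =>
      if i = N - 1 then Set.Ico (((N : ℝ) - 1) * h) R
      else Set.Ico ((i : ℝ) * h) (((i : ℝ) + 1) * h)
    let Ξ : ℕ → Set ℝ := fun i =>
      if i = 0 then Set.Ico (0 : ℝ) (2 * h)
      else if i = N - 2 then Set.Ico (((N : ℝ) - 3) * h) R
      else if i = N - 1 then Set.Ico (((N : ℝ) - 2) * h) R
      else Set.Ico (((i : ℝ) - 1) * h) (((i : ℝ) + 2) * h)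
    1000 ≤ N →
    (∀ i < N, μ (Ξ i) < ENNReal.ofReal (1 - ν) * μ (Set.Ico (0 : ℝ) R)) →
    ∃ Z : Finset ℕ, Z.Nonempty ∧ (∀ i ∈ Z, i < N) ∧
      (∀ i ∈ Z, ∀ j ∈ Z, i ≠ j → Δ i ∩ Ξ j = ∅) ∧
      ENNReal.ofReal (ν / 20) * μ (Set.Ico (0 : ℝ) R) ≤ μ (⋃ i ∈ Z, Δ i) ∧
      ENNReal.ofReal (ν / 20) * μ (Set.Ico (0 : ℝ) R)
        ≤ μ (Set.Ico (0 : ℝ) R \ ⋃ i ∈ Z, Ξ i) := by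
  intro N Δ Ξ hN hΞ
  classical
  set I : Set ℝ := Set.Ico (0 : ℝ) R with hI_def
  have hfin : ∀ s : Set ℝ, μ s ≠ ⊤ := fun s => measure_ne_top μ s
  have hΔdef : ∀ i, i ≠ N - 1 → Δ i = Set.Ico ((i : ℝ) * h) (((i : ℝ) + 1) * h) :=
    fun i hi => if_neg hi
  have hΞ0 : Ξ 0 = Set.Ico (0 : ℝ) (2 * h) := if_pos rfl
  have hΞdef : ∀ i, i ≠ 0 → i ≠ N - 2 → i ≠ N - 1 →
      Ξ i = Set.Ico (((i : ℝ) - 1) * h) (((i : ℝ) + 2) * h) := by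
    intro i h0 h2 h1
    show (if i = 0 then _ else if i = N - 2 then _ else if i = N - 1 then _ else _) = _
    rw [if_neg h0, if_neg h2, if_neg h1]
  have hΞN2 : Ξ (N - 2) = Set.Ico (((N : ℝ) - 3) * h) R := by
    show (if N - 2 = 0 then _ else if N - 2 = N - 2 then _ else _) = _
    rw [if_neg (by omega), if_pos rfl]
  set M : ℝ := (μ I).toReal with hM_def
  -- positivity of total mass
  have hM : 0 < M := by
    have h0 := hΞ 0 (by omega)
    have hμI0 : μ I ≠ 0 := by
      intro hz
      rw [hz, mul_zero] at h0
      exact absurd h0 (by simp)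
    exact ENNReal.toReal_pos hμI0 (hfin I)
  have hνM : 0 < ν * M := mul_pos hν hM
  -- monotonicity and subadditivity in real form
  have hmono : ∀ {s t : Set ℝ}, s ⊆ t → (μ s).toReal ≤ (μ t).toReal := by
    intro s t hst
    exact (ENNReal.toReal_le_toReal (hfin s) (hfin t)).mpr (measure_mono hst)
  have hsub : ∀ {s t u : Set ℝ}, s ⊆ t ∪ u →
      (μ s).toReal ≤ (μ t).toReal + (μ u).toReal := by
    intro s t u hst
    calc (μ s).toReal ≤ (μ (t ∪ u)).toReal := hmono hst
      _ ≤ (μ t).toReal + (μ u).toReal := by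
          rw [← ENNReal.toReal_add (hfin t) (hfin u)]
          exact (ENNReal.toReal_le_toReal (hfin _)
            (by exact ENNReal.add_ne_top.mpr ⟨hfin t, hfin u⟩)).mpr (measure_union_le t u)
  -- hypothesis in real form
  have hΞ' : ∀ i, i < N → (μ (Ξ i)).toReal < (1 - ν) * M := by
    intro i hi
    have h1 := hΞ i hi
    have h2 : (ENNReal.ofReal (1 - ν) * μ I).toReal = (1 - ν) * M := by
      rw [ENNReal.toReal_mul, ENNReal.toReal_ofReal (by linarith)]
    rw [← h2]
    exact (ENNReal.toReal_lt_toReal (hfin _)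
      (ENNReal.mul_ne_top ENNReal.ofReal_ne_top (hfin I))).mpr h1
  -- prefix mass function
  set F : ℕ → ℝ := fun j => (μ (Set.Ico (0 : ℝ) ((j : ℝ) * h))).toReal with hF_def
  -- existence of an index with big prefix mass
  have hPex : ∃ kk : ℕ, kk ≤ N - 4 ∧ ν * M / 10 ≤ F (kk + 1) := by
    refine ⟨N - 4, le_refl _, ?_⟩
    have hc : ((N - 4 + 1 : ℕ) : ℝ) = (N : ℝ) - 3 := by
      have : (N - 4 + 1 : ℕ) = N - 3 := by omega
      rw [this, Nat.cast_sub (by omega)]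
      norm_num
    have hsplit : M ≤ F (N - 4 + 1) + (μ (Ξ (N - 2))).toReal := by
      apply hsub
      rintro x ⟨hx1, hx2⟩
      rcases lt_or_ge x (((N : ℝ) - 3) * h) with hx | hx
      · left; rw [hc]; exact ⟨hx1, hx⟩
      · right; rw [hΞN2]; exact ⟨hx, hx2⟩
    have h7 := hΞ' (N - 2) (by omega)
    have hr : (1 - ν) * M = M - ν * M := by ring
    linarith
  have hPex' : ∃ kk : ℕ, ν * M / 10 ≤ F (kk + 1) := by
    obtain ⟨kk, _, hkk⟩ := hPex; exact ⟨kk, hkk⟩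
  set k : ℕ := Nat.find hPex' with hk_def
  have hkP : ν * M / 10 ≤ F (k + 1) := Nat.find_spec hPex'
  have hkle : k ≤ N - 4 := by
    obtain ⟨kk, hkk1, hkk2⟩ := hPex
    exact le_trans (Nat.find_min' hPex' hkk2) hkk1
  have hkprev : F k < ν * M / 10 := by
    rcases Nat.eq_zero_or_pos k with hk0 | hk0
    · rw [hk0]
      have : F 0 = 0 := by
        simp only [hF_def, Nat.cast_zero, zero_mul, Set.Ico_self, measure_empty,
          ENNReal.toReal_zero]
      rw [this]; linarith
    · have := Nat.find_min hPex' (m := k - 1) (by omega)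
      push_neg at this
      have hk1 : k - 1 + 1 = k := by omega
      rwa [hk1] at this
  clear_value k
  -- prefix unions of cells
  have hUnion : ∀ n, n ≤ N - 1 →
      (⋃ i ∈ Finset.range n, Δ i) = Set.Ico (0 : ℝ) ((n : ℝ) * h) := by
    intro n
    induction n with
    | zero => intro _; simp
    | succ n ih =>
      intro hn
      rw [Finset.range_add_one, Finset.set_biUnion_insert, ih (by omega),
        hΔdef n (by omega), Set.union_comm,
        Set.Ico_union_Ico_eq_Ico (by positivity)
          (by nlinarith [Nat.cast_nonneg (α := ℝ) n] : (n : ℝ) * h ≤ ((n : ℝ) + 1) * h)]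
      congr 1
      push_cast
      ring
  -- split the prefix by parity
  set Zeven : Finset ℕ := (Finset.range (k + 1)).filter (fun i => i % 2 = 0) with hZe_def
  set Zodd : Finset ℕ := (Finset.range (k + 1)).filter (fun i => i % 2 = 1) with hZo_def
  have hrangesplit : Finset.range (k + 1) = Zeven ∪ Zodd := by
    ext i
    simp only [hZe_def, hZo_def, Finset.mem_union, Finset.mem_filter, Finset.mem_range]
    omega
  have hsplit2 : F (k + 1) ≤ (μ (⋃ i ∈ Zeven, Δ i)).toReal
      + (μ (⋃ i ∈ Zodd, Δ i)).toReal := by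
    apply hsub
    rw [← Finset.set_biUnion_union, ← hrangesplit, hUnion (k + 1) (by omega)]
  -- choose the heavier parity class
  have key : ∃ Z : Finset ℕ, (∀ i ∈ Z, i ≤ k) ∧
      (∀ i ∈ Z, ∀ j ∈ Z, i ≠ j → i + 2 ≤ j ∨ j + 2 ≤ i) ∧
      ν * M / 20 ≤ (μ (⋃ i ∈ Z, Δ i)).toReal := by
    by_cases hc : ν * M / 20 ≤ (μ (⋃ i ∈ Zeven, Δ i)).toReal
    · refine ⟨Zeven, ?_, ?_, hc⟩
      · intro i hi
        simp only [hZe_def, Finset.mem_filter, Finset.mem_range] at hi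
        omega
      · intro i hi j hj hij
        simp only [hZe_def, Finset.mem_filter, Finset.mem_range] at hi hj
        omega
    · refine ⟨Zodd, ?_, ?_, by linarith⟩
      · intro i hi
        simp only [hZo_def, Finset.mem_filter, Finset.mem_range] at hi
        omega
      · intro i hi j hj hij
        simp only [hZo_def, Finset.mem_filter, Finset.mem_range] at hi hj
        omega
  obtain ⟨Z, hZk, hZsep, hZmass⟩ := key
  -- nonemptiness
  have hZne : Z.Nonempty := by
    rcases Z.eq_empty_or_nonempty with hZ0 | hZ0
    · rw [hZ0] at hZmass
      simp only [Finset.notMem_empty, Set.iUnion_of_empty, Set.iUnion_empty,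
        measure_empty, ENNReal.toReal_zero] at hZmass
      linarith
    · exact hZ0
  -- conversion back to ENNReal
  have hconv : ∀ S : Set ℝ, ν * M / 20 ≤ (μ S).toReal →
      ENNReal.ofReal (ν / 20) * μ I ≤ μ S := by
    intro S hS
    have h1 : ENNReal.ofReal (ν / 20) * μ I = ENNReal.ofReal (ν / 20 * M) := by
      conv_lhs => rw [← ENNReal.ofReal_toReal (hfin I)]
      rw [← ENNReal.ofReal_mul (by positivity)]
    rw [h1]
    refine ENNReal.ofReal_le_of_le_toReal ?_
    linarith
  refine ⟨Z, hZne, ?_, ?_, hconv _ hZmass, ?_⟩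
  · intro i hi
    have := hZk i hi
    omega
  · -- separation
    intro i hi j hj hij
    have hik := hZk i hi
    have hjk := hZk j hj
    rw [hΔdef i (by omega)]
    rcases hZsep i hi j hj hij with hsep | hsep
    · -- i + 2 ≤ j, in particular j ≠ 0
      rw [hΞdef j (by omega) (by omega) (by omega)]
      apply Set.eq_empty_iff_forall_notMem.mpr
      rintro x ⟨⟨hx1, hx2⟩, ⟨hx3, hx4⟩⟩
      have hcast : (i : ℝ) + 2 ≤ (j : ℝ) := by exact_mod_cast hsep
      nlinarith
    · -- j + 2 ≤ i
      by_cases hj0 : j = 0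
      · subst hj0
        rw [hΞ0]
        apply Set.eq_empty_iff_forall_notMem.mpr
        rintro x ⟨⟨hx1, hx2⟩, ⟨hx3, hx4⟩⟩
        have hcast : (2 : ℝ) ≤ (i : ℝ) := by exact_mod_cast hsep
        nlinarith
      · rw [hΞdef j hj0 (by omega) (by omega)]
        apply Set.eq_empty_iff_forall_notMem.mpr
        rintro x ⟨⟨hx1, hx2⟩, ⟨hx3, hx4⟩⟩
        have hcast : (j : ℝ) + 2 ≤ (i : ℝ) := by exact_mod_cast hsep
        nlinarith
  · -- complement mass
    apply hconv
    have hTail : Set.Ico (((k : ℝ) + 2) * h) R ⊆ I \ ⋃ i ∈ Z, Ξ i := by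
      rintro x ⟨hx1, hx2⟩
      have hx0 : (0 : ℝ) ≤ x := le_trans (by positivity) hx1
      refine ⟨⟨hx0, hx2⟩, ?_⟩
      intro hmem
      obtain ⟨i, hiZ, hxi⟩ := Set.mem_iUnion₂.mp hmem
      have hik := hZk i hiZ
      have hikr : (i : ℝ) ≤ (k : ℝ) := by exact_mod_cast hik
      by_cases hi0 : i = 0
      · subst hi0
        rw [hΞ0] at hxi
        obtain ⟨hy1, hy2⟩ := hxi
        nlinarith [Nat.cast_nonneg (α := ℝ) k]
      · rw [hΞdef i hi0 (by omega) (by omega)] at hxi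
        obtain ⟨hy1, hy2⟩ := hxi
        nlinarith
    have h5 : M ≤ F (k + 2) + (μ (Set.Ico (((k : ℝ) + 2) * h) R)).toReal := by
      apply hsub
      rintro x ⟨hx1, hx2⟩
      have hc2 : ((k + 2 : ℕ) : ℝ) = (k : ℝ) + 2 := by push_cast; ring
      rcases lt_or_ge x (((k : ℝ) + 2) * h) with hx | hx
      · left; rw [hc2]; exact ⟨hx1, hx⟩
      · right; exact ⟨hx, hx2⟩
    have h6 : F (k + 2) ≤ F k + (μ (Ξ (k + 1))).toReal := by
      apply hsub
      rintro x ⟨hx1, hx2⟩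
      have hc2 : ((k + 2 : ℕ) : ℝ) = (k : ℝ) + 2 := by push_cast; ring
      rw [hc2] at hx2
      rcases lt_or_ge x ((k : ℝ) * h) with hx | hx
      · left; exact ⟨hx1, hx⟩
      · right
        rw [hΞdef (k + 1) (by omega) (by omega) (by omega)]
        have hc3 : ((k + 1 : ℕ) : ℝ) = (k : ℝ) + 1 := by push_cast; ring
        rw [hc3]
        constructor
        · have he : ((k : ℝ) + 1 - 1) * h = (k : ℝ) * h := by ring
          rw [he]; exact hx
        · have he : x < ((k : ℝ) + 1 + 2) * h := by linarith [hh.le]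
          exact he
    have h7 := hΞ' (k + 1) (by omega)
    have h8 := hmono hTail
    have hr : (1 - ν) * M = M - ν * M := by ring
    linarith
end

section
/- Let L > 0 and define Υ(z) = exp(max{L/10 − z, 0}/L) − 1 for z ≥ 0. Let A and B be real numbers with 0 ≤ A ≤ 27L/4000 and 0 ≤ B ≤ 243/160000, and set ρ(x) = e^{B}·Υ(A + x) for x ≥ 0. Then: (a) 0 ≤ ρ(x) ≤ 0.2 for all x ≥ 0; (b) ρ(x) ≥ 0.05 for all x ∈ [0, L/40]; (c) ρ(x) = 0 for all x ≥ L/10; and (d) ρ is nonincreasing and convex on [0,∞). -/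
/-!
`ρ` is `e^B (e^{h} - 1)` for the hinge exponent `h(x) = max (L/10 - A - x) 0 / L`, which is convex,
nonincreasing and vanishes from `x = L/10 - A` on; this gives (c), and composing with the
increasing convex `exp` gives (d). For (a) and (b) the exponent lies in `[0, 1/10]` for `x ≥ 0` and is at least
`1/10 - 27/4000 - 1/40 = 273/4000` on `[0, L/40]`, while `1 ≤ e^B ≤ e^{1/10} ≤ 10/9`.
-/

open Real Set

theorem ConvexOn.exp_comp {E : Type*} [AddCommGroup E] [Module ℝ E] {s : Set E} {f : E → ℝ}
    (hf : ConvexOn ℝ s f) : ConvexOn ℝ s (fun x => exp (f x)) := by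
  refine ⟨hf.1, fun x hx y hy a b ha hb hab => ?_⟩
  calc exp (f (a • x + b • y)) ≤ exp (a • f x + b • f y) := exp_le_exp.2 (hf.2 hx hy ha hb hab)
    _ ≤ a • exp (f x) + b • exp (f y) := convexOn_exp.2 (mem_univ _) (mem_univ _) ha hb hab

theorem exp_le_ten_div_nine {x : ℝ} (hx : x ≤ 1 / 10) : exp x ≤ 10 / 9 :=
  calc exp x ≤ exp (1 / 10) := exp_le_exp.2 hx
    _ ≤ 1 / (1 - 1 / 10) := exp_bound_div_one_sub_of_interval (by norm_num) (by norm_num)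
    _ = 10 / 9 := by norm_num

theorem convexOn_max_sub_div {L : ℝ} (c : ℝ) (hL : 0 ≤ L) :
    ConvexOn ℝ univ (fun z : ℝ => max (c - z) 0 / L) := by
  have hlin : ConvexOn ℝ univ (fun z : ℝ => c - z) :=
    (convexOn_const c convex_univ).sub (concaveOn_id convex_univ)
  refine ((hlin.sup (convexOn_const 0 convex_univ)).smul (inv_nonneg.2 hL)).congr fun z _ => ?_
  simp [div_eq_inv_mul]

noncomputable def supersolution (L A B x : ℝ) : ℝ :=
  exp B * (exp (max (L / 10 - (A + x)) 0 / L) - 1)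

section Supersolution

variable {L A B : ℝ}

theorem supersolution_nonneg (hL : 0 ≤ L) (x : ℝ) : 0 ≤ supersolution L A B x :=
  mul_nonneg (exp_pos B).le <| sub_nonneg.2 <| one_le_exp <| div_nonneg (le_max_right _ _) hL

theorem supersolution_le (hL : 0 < L) (hA0 : 0 ≤ A) (hB : B ≤ 1 / 10) {x : ℝ} (hx : 0 ≤ x) :
    supersolution L A B x ≤ 0.2 := by
  have hexponent : max (L / 10 - (A + x)) 0 / L ≤ 1 / 10 := by
    rw [div_le_iff₀ hL]
    exact max_le (by linarith) (by linarith)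
  have h1 : 1 ≤ exp (max (L / 10 - (A + x)) 0 / L) :=
    one_le_exp (div_nonneg (le_max_right _ _) hL.le)
  have h2 := exp_le_ten_div_nine hexponent
  have h3 := exp_le_ten_div_nine hB
  unfold supersolution
  nlinarith [exp_pos B]

theorem le_supersolution (hL : 0 < L) (hA : A ≤ 27 * L / 4000) (hB0 : 0 ≤ B) {x : ℝ}
    (hx : x ≤ L / 40) : 0.05 ≤ supersolution L A B x := by
  have hexponent : 273 / 4000 ≤ max (L / 10 - (A + x)) 0 / L := by
    rw [le_div_iff₀ hL]
    exact (by linarith : 273 / 4000 * L ≤ L / 10 - (A + x)).trans (le_max_left _ _)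
  have h1 := (add_one_le_exp (273 / 4000 : ℝ)).trans (exp_le_exp.2 hexponent)
  have h2 := one_le_exp hB0
  unfold supersolution
  nlinarith

theorem supersolution_eq_zero {x : ℝ} (hx : L / 10 ≤ A + x) : supersolution L A B x = 0 := by
  simp [supersolution, max_eq_right (sub_nonpos.2 hx)]

theorem antitone_supersolution (hL : 0 ≤ L) : Antitone (supersolution L A B) := by
  intro x y hxy
  have hexponent : max (L / 10 - (A + y)) 0 / L ≤ max (L / 10 - (A + x)) 0 / L :=
    div_le_div_of_nonneg_right (max_le_max (by linarith) le_rfl) hL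
  exact mul_le_mul_of_nonneg_left (sub_le_sub_right (exp_le_exp.2 hexponent) 1) (exp_pos B).le

theorem convexOn_supersolution (hL : 0 ≤ L) : ConvexOn ℝ univ (supersolution L A B) := by
  have hΥ := ((convexOn_max_sub_div (L / 10) hL).exp_comp.translate_right A).add_const (-1)
  refine (hΥ.smul (exp_pos B).le).congr fun x _ => ?_
  simp [supersolution, sub_eq_add_neg]

end Supersolution

/-- Quantitative properties of the explicit supersolution
`ρ(x) = e^B·Υ(A+x)` with `Υ(z) = exp(max{L/10 − z, 0}/L) − 1`,
`0 ≤ A ≤ 27L/4000` and `0 ≤ B ≤ 243/160000`: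
(a) `0 ≤ ρ ≤ 0.2` on `[0,∞)`; (b) `ρ ≥ 0.05` on `[0, L/40]`;
(c) `ρ = 0` on `[L/10, ∞)`; (d) `ρ` is nonincreasing and convex on `[0,∞)`. -/
theorem supersolution_bounds (L A B : ℝ) (hL : 0 < L)
    (hA0 : 0 ≤ A) (hA : A ≤ 27 * L / 4000)
    (hB0 : 0 ≤ B) (hB : B ≤ 243 / 160000) :
    let Υ : ℝ → ℝ := fun z => Real.exp (max (L / 10 - z) 0 / L) - 1
    let ρ : ℝ → ℝ := fun x => Real.exp B * Υ (A + x)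
    (∀ x, 0 ≤ x → 0 ≤ ρ x ∧ ρ x ≤ 0.2) ∧
      (∀ x ∈ Set.Icc (0 : ℝ) (L / 40), 0.05 ≤ ρ x) ∧
      (∀ x, L / 10 ≤ x → ρ x = 0) ∧
      AntitoneOn ρ (Set.Ici (0 : ℝ)) ∧ ConvexOn ℝ (Set.Ici (0 : ℝ)) ρ := by
  intro Υ ρ
  refine ⟨fun x hx => ⟨supersolution_nonneg hL.le x,
      supersolution_le hL hA0 (hB.trans (by norm_num)) hx⟩,
    fun x hx => le_supersolution hL hA hB0 hx.2,
    fun x hx => supersolution_eq_zero (by linarith),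
    (antitone_supersolution hL.le).antitoneOn _,
    (convexOn_supersolution hL.le).subset (subset_univ _) (convex_Ici 0)⟩
end

section
/- Let δ > 0, a ∈ ℝ, and let g : ℝ → [0,∞) be Lebesgue integrable with g = 0 outside the interval [a, a+δ]. Then ∫₀^∞ z·(∫_ℝ g(ω)·g(ω+z) dω) dz ≤ δ·(∫_ℝ g)², and ∫₀^∞ z²·(∫_ℝ g(ω)·g(ω+z) dω) dz ≤ δ²·(∫_ℝ g)². -/
open MeasureTheory

section Aux

variable (δ a : ℝ) (g : ℝ → ℝ)

/-- Key generic lemma: n-th moment bound. -/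
theorem aux_moment (hδ : 0 < δ) (hg : Integrable g) (hg0 : ∀ ω, 0 ≤ g ω)
    (hsupp : ∀ ω, ω ∉ Set.Icc a (a + δ) → g ω = 0) (n : ℕ) :
    ∫ z in Set.Ioi (0 : ℝ), z ^ n * ∫ ω, g ω * g (ω + z)
      ≤ δ ^ n * (∫ ω, g ω) ^ 2 := by
  set C : ℝ → ℝ := fun z => ∫ ω, g ω * g (ω + z) with hCdef
  -- Integrability on the product
  have hprod : Integrable (fun q : ℝ × ℝ => g q.1 * g q.2)
      ((volume : Measure ℝ).prod volume) := hg.mul_prod hg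
  have hmp : MeasurePreserving (fun p : ℝ × ℝ => (p.1, p.1 + p.2))
      ((volume : Measure ℝ).prod volume) ((volume : Measure ℝ).prod volume) :=
    measurePreserving_prod_add volume volume
  have hemb : MeasurableEmbedding (fun p : ℝ × ℝ => (p.1, p.1 + p.2)) :=
    (MeasurableEquiv.shearAddRight ℝ).measurableEmbedding
  have hF : Integrable (fun p : ℝ × ℝ => g p.1 * g (p.1 + p.2))
      ((volume : Measure ℝ).prod volume) :=
    (hmp.integrable_comp_emb (g := fun q : ℝ × ℝ => g q.1 * g q.2) hemb).mpr hprod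
  -- C is integrable
  have hCint : Integrable C := by
    have := hF.integral_prod_right
    simpa [hCdef] using this
  -- C nonneg
  have hC0 : ∀ z, 0 ≤ C z := fun z =>
    integral_nonneg fun ω => mul_nonneg (hg0 ω) (hg0 (ω + z))
  -- C vanishes for z > δ
  have hCz : ∀ z, δ < z → C z = 0 := by
    intro z hz
    have : (fun ω => g ω * g (ω + z)) = fun _ => 0 := by
      funext ω
      by_cases hω : ω ∈ Set.Icc a (a + δ)
      · have : ω + z ∉ Set.Icc a (a + δ) := by
          intro h
          have := h.2
          have := hω.1
          linarith
        rw [hsupp _ this, mul_zero]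
      · rw [hsupp _ hω, zero_mul]
    simp [hCdef, this]
  -- total integral of C
  have hCtot : ∫ z, C z = (∫ ω, g ω) ^ 2 := by
    have hswap : ∫ z, C z = ∫ ω, ∫ z, g ω * g (ω + z) := by
      exact (integral_integral_swap (by exact hF)).symm
    rw [hswap]
    have : ∀ ω, ∫ z, g ω * g (ω + z) = g ω * ∫ ω', g ω' := by
      intro ω
      rw [integral_const_mul]
      congr 1
      exact integral_add_left_eq_self g ω
    simp_rw [this, integral_mul_const, sq]
  -- the integrand function
  set f : ℝ → ℝ := fun z => z ^ n * C z with hfdef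
  -- integrability of f on Ioc 0 δ
  have hCm : AEStronglyMeasurable C volume := hCint.aestronglyMeasurable
  have hfm : AEStronglyMeasurable f volume := by
    exact (measurable_id.pow_const n).aestronglyMeasurable.mul hCm
  have hfInt : IntegrableOn f (Set.Ioc 0 δ) := by
    apply Integrable.mono (hCint.const_mul (δ ^ n)).restrict hfm.restrict
    · filter_upwards [ae_restrict_mem measurableSet_Ioc] with z hz
      rw [Real.norm_eq_abs, Real.norm_eq_abs, abs_of_nonneg
          (mul_nonneg (pow_nonneg hz.1.le n) (hC0 z)),
        abs_of_nonneg (mul_nonneg (pow_nonneg hδ.le n) (hC0 z))]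
      exact mul_le_mul_of_nonneg_right (pow_le_pow_left₀ hz.1.le hz.2 n) (hC0 z)
  -- restrict to Ioc 0 δ
  have hsplit : ∫ z in Set.Ioi (0 : ℝ), f z = ∫ z in Set.Ioc 0 δ, f z := by
    have hu : Set.Ioi (0:ℝ) = Set.Ioc 0 δ ∪ Set.Ioi δ := by
      rw [Set.Ioc_union_Ioi_eq_Ioi hδ.le]
    rw [hu, setIntegral_union (by rw [Set.disjoint_left]; intro x h1 h2; exact absurd (Set.mem_of_mem_inter_left (Set.mem_inter h1 h2)) (by simp at h1 h2 ⊢; intro _; linarith [h1.2, h2])) measurableSet_Ioi hfInt ?_]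
    · have : ∫ z in Set.Ioi δ, f z = 0 := by
        apply setIntegral_eq_zero_of_forall_eq_zero
        intro z hz
        simp [hfdef, hCz z hz]
      rw [this, add_zero]
    · apply IntegrableOn.congr_fun (integrableOn_zero)
      · intro z hz; simp [hfdef, hCz z hz]
      · exact measurableSet_Ioi
  rw [hsplit]
  calc ∫ z in Set.Ioc 0 δ, f z ≤ ∫ z in Set.Ioc 0 δ, δ ^ n * C z := by
        apply setIntegral_mono_on hfInt ((hCint.const_mul (δ ^ n)).restrict) measurableSet_Ioc
        intro z hz
        exact mul_le_mul_of_nonneg_right (pow_le_pow_left₀ hz.1.le hz.2 n) (hC0 z)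
    _ = δ ^ n * ∫ z in Set.Ioc 0 δ, C z := by rw [integral_const_mul]
    _ ≤ δ ^ n * ∫ z, C z := by
        apply mul_le_mul_of_nonneg_left _ (pow_nonneg hδ.le n)
        exact setIntegral_le_integral hCint (Filter.Eventually.of_forall hC0)
    _ = δ ^ n * (∫ ω, g ω) ^ 2 := by rw [hCtot]

end Aux

/-- Moment bounds for the autocorrelation of a nonnegative integrable function
supported in an interval of length `δ`:
`∫₀^∞ z·(∫ g(ω)g(ω+z) dω) dz ≤ δ·(∫ g)²` and
`∫₀^∞ z²·(∫ g(ω)g(ω+z) dω) dz ≤ δ²·(∫ g)²`. -/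
theorem autocorrelation_moment_bounds (δ a : ℝ) (hδ : 0 < δ)
    (g : ℝ → ℝ) (hg : Integrable g) (hg0 : ∀ ω, 0 ≤ g ω)
    (hsupp : ∀ ω, ω ∉ Set.Icc a (a + δ) → g ω = 0) :
    (∫ z in Set.Ioi (0 : ℝ), z * ∫ ω, g ω * g (ω + z)
        ≤ δ * (∫ ω, g ω) ^ 2) ∧
    (∫ z in Set.Ioi (0 : ℝ), z ^ 2 * ∫ ω, g ω * g (ω + z)
        ≤ δ ^ 2 * (∫ ω, g ω) ^ 2) := by
  constructor
  · have h := aux_moment δ a g hδ hg hg0 hsupp 1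
    simpa using h
  · exact aux_moment δ a g hδ hg hg0 hsupp 2
end

section
/- Let μ be a finite Borel measure on [0,∞) with μ({0}) = 0. Let ς > 0, C > 0 and m ∈ ℕ, and assume that μ([0, 2^{−j})) ≥ C·2^{−jς} for every integer j ≥ m. Then the set { j ∈ ℕ : μ([2^{−j−1}, 2^{−j})) > (C/2)·((2^ς − 1)/2^ς)·2^{−jς} } is infinite. -/
open MeasureTheory

/-- Dyadic pigeonhole lemma: if a finite Borel measure `μ` on `[0,∞)` has no
atom at the origin and satisfies `μ([0, 2^{−j})) ≥ C·2^{−jς}` for every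
`j ≥ m`, then infinitely many dyadic annuli `[2^{−j−1}, 2^{−j})` carry mass
greater than `(C/2)·((2^ς − 1)/2^ς)·2^{−jς}`. -/
theorem dyadic_pigeonhole (μ : Measure ℝ) [IsFiniteMeasure μ]
    (hsupp : μ (Set.Iio (0 : ℝ)) = 0) (hatom : μ {(0 : ℝ)} = 0)
    (ς C : ℝ) (hς : 0 < ς) (hC : 0 < C) (m : ℕ)
    (hlower : ∀ j : ℕ, m ≤ j →
      ENNReal.ofReal (C * (2 : ℝ) ^ (-(j : ℝ) * ς))
        ≤ μ (Set.Ico (0 : ℝ) ((2 : ℝ) ^ (-(j : ℝ))))) :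
    {j : ℕ |
      ENNReal.ofReal ((C / 2) * (((2 : ℝ) ^ ς - 1) / (2 : ℝ) ^ ς) *
          (2 : ℝ) ^ (-(j : ℝ) * ς))
        < μ (Set.Ico ((2 : ℝ) ^ (-(j : ℝ) - 1)) ((2 : ℝ) ^ (-(j : ℝ))))}.Infinite := by
  set r : ℝ := (2 : ℝ) ^ (-ς) with hrdef
  have hr0 : 0 < r := Real.rpow_pos_of_pos two_pos _
  have hr1 : r < 1 := Real.rpow_lt_one_of_one_lt_of_neg one_lt_two (by linarith)
  have h2s : (0 : ℝ) < (2 : ℝ) ^ ς := Real.rpow_pos_of_pos two_pos _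
  have hfrac : ((2 : ℝ) ^ ς - 1) / (2 : ℝ) ^ ς = 1 - r := by
    rw [hrdef, Real.rpow_neg (by norm_num)]
    field_simp
  by_contra hfin
  rw [Set.not_infinite] at hfin
  obtain ⟨b, hb⟩ := hfin.bddAbove
  set J : ℕ := max m (b + 1) with hJdef
  have hJm : m ≤ J := le_max_left _ _
  have hnotin : ∀ j : ℕ, J ≤ j →
      μ (Set.Ico ((2 : ℝ) ^ (-(j : ℝ) - 1)) ((2 : ℝ) ^ (-(j : ℝ))))
        ≤ ENNReal.ofReal ((C / 2) * (((2 : ℝ) ^ ς - 1) / (2 : ℝ) ^ ς) *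
            (2 : ℝ) ^ (-(j : ℝ) * ς)) := by
    intro j hj
    by_contra h
    push_neg at h
    have : j ≤ b := hb h
    omega
  -- covering: Ioo 0 (2^{-J}) ⊆ ⋃ k, annulus (J+k)
  have hsub : Set.Ioo (0 : ℝ) ((2 : ℝ) ^ (-(J : ℝ))) ⊆
      ⋃ k : ℕ, Set.Ico ((2 : ℝ) ^ (-((J + k : ℕ) : ℝ) - 1)) ((2 : ℝ) ^ (-((J + k : ℕ) : ℝ))) := by
    intro x hx
    obtain ⟨hx0, hxJ⟩ := hx
    have hP : ∃ n : ℕ, (2 : ℝ) ^ (-(n : ℝ) - 1) ≤ x := by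
      obtain ⟨n, hn⟩ := exists_pow_lt_of_lt_one hx0 (by norm_num : (1:ℝ)/2 < 1)
      refine ⟨n, le_of_lt ?_⟩
      calc (2 : ℝ) ^ (-(n : ℝ) - 1) ≤ (2:ℝ) ^ (-(n:ℝ)) := by
            apply Real.rpow_le_rpow_of_exponent_le (by norm_num); linarith
        _ = ((1:ℝ)/2) ^ n := by
            rw [Real.rpow_neg (by norm_num), Real.rpow_natCast, one_div, inv_pow]
        _ < x := hn
    classical
    let j0 := Nat.find hP
    have hj0le : (2 : ℝ) ^ (-(j0 : ℝ) - 1) ≤ x := Nat.find_spec hP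
    have hxlt : x < (2 : ℝ) ^ (-(j0 : ℝ)) := by
      rcases Nat.eq_zero_or_pos j0 with h0 | hpos
      · rw [h0]
        calc x < (2 : ℝ) ^ (-(J : ℝ)) := hxJ
          _ ≤ (2:ℝ) ^ (-(0:ℕ) : ℝ) := by
              simp only [CharP.cast_eq_zero, neg_zero]
              apply Real.rpow_le_rpow_of_exponent_le (by norm_num)
              simp
          _ = (2:ℝ) ^ (-((0:ℕ):ℝ)) := by norm_num
      · obtain ⟨n, hj0⟩ := Nat.exists_eq_succ_of_ne_zero hpos.ne'
        have hmin := Nat.find_min hP (m := n) (by omega)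
        push_neg at hmin
        have hcast : -(j0:ℝ) = -(n:ℝ) - 1 := by rw [hj0]; push_cast; ring
        rw [hcast]; exact hmin
    have hJj0 : J ≤ j0 := by
      by_contra h
      push_neg at h
      have : (2 : ℝ) ^ (-(J : ℝ)) ≤ (2 : ℝ) ^ (-(j0 : ℝ) - 1) := by
        apply Real.rpow_le_rpow_of_exponent_le (by norm_num)
        have : (j0 : ℝ) + 1 ≤ (J : ℝ) := by exact_mod_cast h
        linarith
      linarith [lt_of_lt_of_le hxJ this]
    refine Set.mem_iUnion.2 ⟨j0 - J, ?_⟩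
    have : J + (j0 - J) = j0 := by omega
    rw [this]
    exact ⟨hj0le, hxlt⟩
  -- the summable geometric bound
  have hsummable : Summable (fun k : ℕ =>
      (C / 2) * (1 - r) * (2 : ℝ) ^ (-(J : ℝ) * ς) * r ^ k) :=
    (summable_geometric_of_lt_one hr0.le hr1).mul_left _
  have hterm : ∀ k : ℕ,
      (C / 2) * (((2 : ℝ) ^ ς - 1) / (2 : ℝ) ^ ς) * (2 : ℝ) ^ (-((J + k : ℕ) : ℝ) * ς)
        = (C / 2) * (1 - r) * (2 : ℝ) ^ (-(J : ℝ) * ς) * r ^ k := by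
    intro k
    rw [hfrac]
    have : (2 : ℝ) ^ (-((J + k : ℕ) : ℝ) * ς)
        = (2 : ℝ) ^ (-(J : ℝ) * ς) * r ^ k := by
      rw [hrdef, ← Real.rpow_natCast ((2:ℝ) ^ (-ς)) k, ← Real.rpow_mul (by norm_num),
        ← Real.rpow_add (by norm_num : (0:ℝ) < 2)]
      push_cast
      ring_nf
    rw [this]; ring
  have htsum : (∑' k : ℕ, (C / 2) * (1 - r) * (2 : ℝ) ^ (-(J : ℝ) * ς) * r ^ k)
      = (C / 2) * (2 : ℝ) ^ (-(J : ℝ) * ς) := by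
    have h1r : (1:ℝ) - r ≠ 0 := by linarith
    rw [tsum_mul_left, tsum_geometric_of_lt_one hr0.le hr1]
    field_simp
  -- measure estimate
  have hmeas : μ (Set.Ico (0 : ℝ) ((2 : ℝ) ^ (-(J : ℝ))))
      ≤ ENNReal.ofReal ((C / 2) * (2 : ℝ) ^ (-(J : ℝ) * ς)) := by
    have hsplit : Set.Ico (0 : ℝ) ((2 : ℝ) ^ (-(J : ℝ)))
        ⊆ {(0:ℝ)} ∪ Set.Ioo (0 : ℝ) ((2 : ℝ) ^ (-(J : ℝ))) := by
      intro x hx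
      rcases eq_or_lt_of_le hx.1 with h | h
      · exact Or.inl (by simp [← h])
      · exact Or.inr ⟨h, hx.2⟩
    calc μ (Set.Ico (0 : ℝ) ((2 : ℝ) ^ (-(J : ℝ))))
        ≤ μ ({(0:ℝ)} ∪ Set.Ioo (0 : ℝ) ((2 : ℝ) ^ (-(J : ℝ)))) := measure_mono hsplit
      _ ≤ μ {(0:ℝ)} + μ (Set.Ioo (0 : ℝ) ((2 : ℝ) ^ (-(J : ℝ)))) := measure_union_le _ _
      _ = μ (Set.Ioo (0 : ℝ) ((2 : ℝ) ^ (-(J : ℝ)))) := by rw [hatom, zero_add]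
      _ ≤ μ (⋃ k : ℕ, Set.Ico ((2 : ℝ) ^ (-((J + k : ℕ) : ℝ) - 1))
            ((2 : ℝ) ^ (-((J + k : ℕ) : ℝ)))) := measure_mono hsub
      _ ≤ ∑' k : ℕ, μ (Set.Ico ((2 : ℝ) ^ (-((J + k : ℕ) : ℝ) - 1))
            ((2 : ℝ) ^ (-((J + k : ℕ) : ℝ)))) := measure_iUnion_le _
      _ ≤ ∑' k : ℕ, ENNReal.ofReal ((C / 2) * (((2 : ℝ) ^ ς - 1) / (2 : ℝ) ^ ς) *
            (2 : ℝ) ^ (-((J + k : ℕ) : ℝ) * ς)) := by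
          apply ENNReal.tsum_le_tsum
          intro k
          exact hnotin (J + k) (Nat.le_add_right _ _)
      _ = ∑' k : ℕ, ENNReal.ofReal ((C / 2) * (1 - r) * (2 : ℝ) ^ (-(J : ℝ) * ς) * r ^ k) := by
          congr 1; ext k; rw [hterm k]
      _ = ENNReal.ofReal ((C / 2) * (2 : ℝ) ^ (-(J : ℝ) * ς)) := by
          rw [← ENNReal.ofReal_tsum_of_nonneg, htsum]
          · intro k
            exact mul_nonneg (mul_nonneg (mul_nonneg (by linarith) (by linarith))
              (Real.rpow_pos_of_pos two_pos _).le) (pow_nonneg hr0.le k)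
          · exact hsummable
  have hlow := hlower J hJm
  have hle := le_trans hlow hmeas
  rw [ENNReal.ofReal_le_ofReal_iff (mul_nonneg (by linarith) (Real.rpow_pos_of_pos two_pos _).le)] at hle
  have hpow : (0:ℝ) < (2 : ℝ) ^ (-(J : ℝ) * ς) := Real.rpow_pos_of_pos two_pos _
  nlinarith
end

section
/- Let a < b be real numbers, let κ > 0, and let (A_n)_{n∈ℕ} be a sequence of Lebesgue measurable subsets of (a,b) such that every t ∈ (a,b) belongs to A_n for infinitely many n. Then the set { q ∈ ℕ : λ(A_q) ≥ (b−a)·2^{−qκ}·(2^κ − 1)/2^{κ+1} } is infinite, where λ denotes Lebesgue measure. -/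
open MeasureTheory

/-- Covering/pigeonhole lemma: if each point of `(a,b)` belongs to `A n` for
infinitely many `n`, then infinitely many of the sets `A q` have Lebesgue
measure at least `(b−a)·2^{−qκ}·(2^κ − 1)/2^{κ+1}`. -/
theorem measure_pigeonhole (a b κ : ℝ) (hab : a < b) (hκ : 0 < κ)
    (A : ℕ → Set ℝ) (hmeas : ∀ n, MeasurableSet (A n))
    (hsub : ∀ n, A n ⊆ Set.Ioo a b)
    (hinf : ∀ t ∈ Set.Ioo a b, {n : ℕ | t ∈ A n}.Infinite) :
    {q : ℕ |
      ENNReal.ofReal ((b - a) * (2 : ℝ) ^ (-(q : ℝ) * κ) *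
          ((2 : ℝ) ^ κ - 1) / (2 : ℝ) ^ (κ + 1))
        ≤ volume (A q)}.Infinite := by
  by_contra hfin
  rw [Set.not_infinite] at hfin
  obtain ⟨M, hM⟩ := hfin.bddAbove
  set N := M + 1 with hNdef
  have h2 : (0:ℝ) < 2 := by norm_num
  have hNot : ∀ q, N ≤ q → volume (A q) <
      ENNReal.ofReal ((b - a) * (2:ℝ) ^ (-(q:ℝ)*κ) * ((2:ℝ)^κ - 1) / (2:ℝ)^(κ+1)) := by
    intro q hq
    by_contra hc
    push_neg at hc
    have hqM : q ≤ M := hM hc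
    omega
  have hcover : Set.Ioo a b ⊆ ⋃ q : ℕ, A (N + q) := by
    intro t ht
    obtain ⟨n, hn, hlt⟩ := (hinf t ht).exists_gt N
    refine Set.mem_iUnion.2 ⟨n - N, ?_⟩
    have hNn : N + (n - N) = n := by omega
    rw [hNn]; exact hn
  set r : ℝ := (2:ℝ) ^ (-κ) with hr
  have hrpos : 0 < r := Real.rpow_pos_of_pos h2 _
  have hrlt : r < 1 := Real.rpow_lt_one_of_one_lt_of_neg (by norm_num) (by linarith)
  have hxpos : (0:ℝ) < (2:ℝ)^κ := Real.rpow_pos_of_pos h2 _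
  have hx : (1:ℝ) < (2:ℝ)^κ := by
    rw [show (1:ℝ) = (2:ℝ)^(0:ℝ) by simp]
    exact Real.rpow_lt_rpow_left_iff (by norm_num) |>.2 hκ
  have hypos : (0:ℝ) < (2:ℝ)^(-(N:ℝ)*κ) := Real.rpow_pos_of_pos h2 _
  have hy : (2:ℝ)^(-(N:ℝ)*κ) ≤ 1 := by
    apply Real.rpow_le_one_of_one_le_of_nonpos one_le_two
    have : (0:ℝ) ≤ (N:ℝ)*κ := by positivity
    nlinarith
  set C : ℝ := (b - a) * ((2:ℝ)^κ - 1) / (2:ℝ)^(κ+1) * (2:ℝ)^(-(N:ℝ)*κ) with hC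
  have hCnn : 0 ≤ C := by
    apply mul_nonneg _ hypos.le
    apply div_nonneg _ (Real.rpow_pos_of_pos h2 _).le
    nlinarith
  have hterm : ∀ q : ℕ,
      (b - a) * (2:ℝ) ^ (-(((N+q : ℕ)):ℝ)*κ) * ((2:ℝ)^κ - 1) / (2:ℝ)^(κ+1) = C * r ^ q := by
    intro q
    have h1 : (-(((N+q:ℕ)):ℝ)*κ) = (-(N:ℝ)*κ) + (-κ)*(q:ℝ) := by push_cast; ring
    have h2q : (2:ℝ) ^ ((-κ)*(q:ℝ)) = r ^ q := by
      rw [Real.rpow_mul (by norm_num : (0:ℝ) ≤ 2), Real.rpow_natCast]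
    rw [h1, Real.rpow_add h2, h2q, hC]
    ring
  have hsummable : Summable fun q : ℕ => C * r ^ q :=
    (summable_geometric_of_lt_one hrpos.le hrlt).mul_left C
  have key : volume (Set.Ioo a b) ≤ ENNReal.ofReal (C * (1 - r)⁻¹) := by
    calc volume (Set.Ioo a b) ≤ volume (⋃ q : ℕ, A (N + q)) := measure_mono hcover
    _ ≤ ∑' q : ℕ, volume (A (N + q)) := measure_iUnion_le _
    _ ≤ ∑' q : ℕ, ENNReal.ofReal (C * r ^ q) := by
        refine ENNReal.tsum_le_tsum fun q => ?_
        rw [← hterm q]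
        exact le_of_lt (hNot (N + q) (Nat.le_add_right _ _))
    _ = ENNReal.ofReal (∑' q : ℕ, C * r ^ q) := by
        rw [ENNReal.ofReal_tsum_of_nonneg (fun q => by positivity) hsummable]
    _ = ENNReal.ofReal (C * (1 - r)⁻¹) := by
        rw [tsum_mul_left, tsum_geometric_of_lt_one hrpos.le hrlt]
  rw [Real.volume_Ioo] at key
  have hle : b - a ≤ C * (1 - r)⁻¹ := by
    have hnn : 0 ≤ C * (1 - r)⁻¹ := by
      apply mul_nonneg hCnn
      have : 0 < 1 - r := by linarith
      positivity
    exact (ENNReal.ofReal_le_ofReal_iff hnn).1 key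
  have hrinv : r = ((2:ℝ)^κ)⁻¹ := by rw [hr, Real.rpow_neg h2.le]
  have h2k1 : (2:ℝ)^(κ+1) = (2:ℝ)^κ * 2 := by
    rw [Real.rpow_add h2, Real.rpow_one]
  have heq : C * (1 - r)⁻¹ = (b - a) / 2 * (2:ℝ)^(-(N:ℝ)*κ) := by
    rw [hC, hrinv, h2k1]
    have hx1 : (2:ℝ)^κ - 1 ≠ 0 := by linarith
    field_simp
  rw [heq] at hle
  nlinarith
end
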